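/- arXiv:0903.1084 — 12 statements merged into one kernel-verified Lean document; each statement's English description precedes it below -/
import Mathlib

section
/- If Λ = (X, f, x₀) is a minimal L_S-algebra, then there exists at most one Λ-compatible monoid operation on (X, x₀). -/
theorem stmt_0 {S X : Type*} [Nonempty S] [Nonempty X]
    (f : S → X → X) (x₀ : X)
    (hmin : ∀ X' : Set X, x₀ ∈ X' → (∀ s x, x ∈ X' → f s x ∈ X') → ∀ x, x ∈ X')
    (m₁ m₂ : X → X → X)
    (h₁assoc : ∀ a b c, m₁ (m₁ a b) c = m₁ a (m₁ b c))
    (h₁left : ∀ x, m₁ x₀ x = x) (h₁right : ∀ x, m₁ x x₀ = x)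
    (h₁compat : ∀ s x, f s x = m₁ (f s x₀) x)
    (h₂assoc : ∀ a b c, m₂ (m₂ a b) c = m₂ a (m₂ b c))
    (h₂left : ∀ x, m₂ x₀ x = x) (h₂right : ∀ x, m₂ x x₀ = x)
    (h₂compat : ∀ s x, f s x = m₂ (f s x₀) x) :
    m₁ = m₂ := by
  have key : ∀ a, a ∈ {a : X | ∀ b, m₁ a b = m₂ a b} := by
    apply hmin
    · intro b; simp [h₁left, h₂left]
    · intro s a ha b
      calc m₁ (f s a) b = m₁ (m₁ (f s x₀) a) b := by rw [← h₁compat]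
        _ = m₁ (f s x₀) (m₁ a b) := h₁assoc _ _ _
        _ = f s (m₁ a b) := (h₁compat _ _).symm
        _ = f s (m₂ a b) := by rw [ha]
        _ = m₂ (f s x₀) (m₂ a b) := h₂compat _ _
        _ = m₂ (m₂ (f s x₀) a) b := (h₂assoc _ _ _).symm
        _ = m₂ (f s a) b := by rw [← h₂compat]
  funext a b; exact key a b
end

section
/- Let Λ = (X, f, x₀) be an L_S-algebra with a Λ-compatible monoid operation •. Define f' : S × X → X by f'_s(x) = x • f_s(x₀). Then f' is a reflection of f in Λ, and the opposite operation •' (defined by x₁ •' x₂ = x₂ • x₁) is a Λ'-compatible monoid operation, where Λ' = (X, f', x₀). -/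
theorem stmt_3 {S X : Type*} [Nonempty S] [Nonempty X]
    (f : S → X → X) (x₀ : X) (m : X → X → X)
    (hassoc : ∀ a b c, m (m a b) c = m a (m b c))
    (hleft : ∀ x, m x₀ x = x) (hright : ∀ x, m x x₀ = x)
    (hcompat : ∀ s x, f s x = m (f s x₀) x)
    (f' : S → X → X) (hf' : ∀ s x, f' s x = m x (f s x₀))
    (m' : X → X → X) (hm' : ∀ a b, m' a b = m b a) :
    (∀ s, f' s x₀ = f s x₀) ∧
    (∀ s t, (f' s) ∘ (f t) = (f t) ∘ (f' s)) ∧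
    (∀ a b c, m' (m' a b) c = m' a (m' b c)) ∧
    (∀ x, m' x₀ x = x) ∧ (∀ x, m' x x₀ = x) ∧
    (∀ s x, f' s x = m' (f' s x₀) x) := by
  refine ⟨fun s => by simp [hf', hleft], fun s t => funext fun x => ?_,
    fun a b c => by simp [hm', hassoc], fun x => by simp [hm', hright],
    fun x => by simp [hm', hleft], fun s x => by simp [hm', hf', hleft]⟩
  simp only [Function.comp_apply]
  rw [hf', hf', hcompat t x, hcompat t (m x (f s x₀)), hassoc]
end

section
/- Let Λ = (X, f, x₀) be a minimal L_S-algebra with a Λ-compatible monoid operation • and its associated reflection f' (given by f'_s(x) = x • f_s(x₀)). Then the L_S-algebra Λ' = (X, f', x₀) is also minimal. -/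
theorem stmt_4 {S X : Type*} [Nonempty S] [Nonempty X]
    (f : S → X → X) (x₀ : X)
    (hmin : ∀ X' : Set X, x₀ ∈ X' → (∀ s x, x ∈ X' → f s x ∈ X') → ∀ x, x ∈ X')
    (m : X → X → X)
    (hassoc : ∀ a b c, m (m a b) c = m a (m b c))
    (hleft : ∀ x, m x₀ x = x) (hright : ∀ x, m x x₀ = x)
    (hcompat : ∀ s x, f s x = m (f s x₀) x)
    (f' : S → X → X) (hf' : ∀ s x, f' s x = m x (f s x₀)) :
    ∀ X' : Set X, x₀ ∈ X' → (∀ s x, x ∈ X' → f' s x ∈ X') → ∀ x, x ∈ X' := by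
  intro X' h0 hcl x
  have hY : ∀ y, y ∈ {y : X | ∀ z ∈ X', m z y ∈ X'} := by
    apply hmin
    · intro z hz; simpa [hright] using hz
    · intro s y hy z hz
      have : m z (f s y) = m (f' s z) y := by
        rw [hf', hcompat, ← hassoc]
      simp only [Set.mem_setOf_eq, this]
      exact hy _ (hcl s z hz)
  have := hY x x₀ h0
  rwa [hleft] at this
end

section
/- Let Λ = (X, f, x₀) be a minimal L_S-algebra and suppose • is a binary operation on X satisfying x₀ • x = x for all x ∈ X and f_s(x₁) • x₂ = f_s(x₁ • x₂) for all x₁, x₂ ∈ X and s ∈ S. Then • is a Λ-compatible monoid operation on (X, x₀): it is associative, has unit x₀, and each f_s is a left translation. -/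
theorem stmt_5 {S X : Type*} [Nonempty S] [Nonempty X]
    (f : S → X → X) (x₀ : X)
    (hmin : ∀ X' : Set X, x₀ ∈ X' → (∀ s x, x ∈ X' → f s x ∈ X') → ∀ x, x ∈ X')
    (m : X → X → X)
    (h0 : ∀ x, m x₀ x = x)
    (h1 : ∀ s x₁ x₂, m (f s x₁) x₂ = f s (m x₁ x₂)) :
    (∀ a b c, m (m a b) c = m a (m b c)) ∧
    (∀ x, m x₀ x = x) ∧ (∀ x, m x x₀ = x) ∧
    (∀ s x, f s x = m (f s x₀) x) := by
  refine ⟨fun a b c => ?_, h0, fun x => ?_, fun s x => by rw [h1, h0]⟩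
  · exact hmin {a | m (m a b) c = m a (m b c)}
      (by simp [h0]) (fun s a ha => by simp only [Set.mem_setOf_eq] at *; rw [h1, h1, ha, h1]) a
  · exact hmin {x | m x x₀ = x} (h0 x₀)
      (fun s y hy => by simp only [Set.mem_setOf_eq] at *; rw [h1, hy]) x
end

section
/- Let Λ = (X, f, x₀) be a minimal L_S-algebra admitting a reflection f' of f in Λ. Then for each x ∈ X there exists a unique x-allowable mapping ϱ : X → X, i.e., a map with ϱ(x₀) = x and f_s ∘ ϱ = ϱ ∘ f_s for all s ∈ S. -/
theorem stmt_6 {S X : Type*} [Nonempty S] [Nonempty X]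
    (f : S → X → X) (x₀ : X)
    (hmin : ∀ X' : Set X, x₀ ∈ X' → (∀ s x, x ∈ X' → f s x ∈ X') → ∀ x, x ∈ X')
    (f' : S → X → X)
    (h'base : ∀ s, f' s x₀ = f s x₀)
    (h'comm : ∀ s t, (f' s) ∘ (f t) = (f t) ∘ (f' s)) :
    ∀ x : X, ∃! ϱ : X → X, ϱ x₀ = x ∧ ∀ s, (f s) ∘ ϱ = ϱ ∘ (f s) := by
  have hex : ∀ x : X, ∃ ϱ : X → X, ϱ x₀ = x ∧ ∀ s, (f s) ∘ ϱ = ϱ ∘ (f s) := by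
    intro x
    refine hmin {x | ∃ ϱ : X → X, ϱ x₀ = x ∧ ∀ s, (f s) ∘ ϱ = ϱ ∘ (f s)}
      ⟨id, rfl, fun s => rfl⟩ ?_ x
    rintro s y ⟨ϱ, hϱ0, hϱc⟩
    refine ⟨ϱ ∘ f' s, ?_, fun t => ?_⟩
    · simp only [Function.comp_apply, h'base s]
      have := congrFun (hϱc s) x₀
      simpa using this.symm.trans (by simp [hϱ0])
    · calc (f t) ∘ (ϱ ∘ f' s) = (ϱ ∘ f t) ∘ f' s := by rw [← Function.comp_assoc, hϱc t]
        _ = ϱ ∘ (f' s ∘ f t) := by rw [h'comm s t]; rfl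
        _ = (ϱ ∘ f' s) ∘ f t := rfl
  intro x
  obtain ⟨ϱ, hϱ⟩ := hex x
  refine ⟨ϱ, hϱ, ?_⟩
  rintro ψ ⟨hψ0, hψc⟩
  funext y
  refine hmin {y | ψ y = ϱ y} (by simp [hψ0, hϱ.1]) ?_ y
  intro s z hz
  have h1 := congrFun (hψc s) z
  have h2 := congrFun (hϱ.2 s) z
  simp only [Function.comp_apply] at h1 h2 ⊢
  simp only [Set.mem_setOf_eq] at hz ⊢
  rw [← h1, ← h2, hz]
end

section
/- Let Λ = (X, f, x₀) be a minimal L_S-algebra. Then there exists a Λ-compatible monoid operation on (X, x₀) if and only if there exists a reflection f' of f in Λ. -/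
/-- Words in the maps `f' s` (closed under right composition). -/
inductive Word {S X : Type*} (f' : S → X → X) : (X → X) → Prop
  | id : Word f' _root_.id
  | comp (g : X → X) (s : S) : Word f' g → Word f' (g ∘ f' s)

theorem Word.compWord {S X : Type*} {f' : S → X → X} {g h : X → X}
    (hg : Word f' g) (hh : Word f' h) : Word f' (g ∘ h) := by
  induction hh with
  | id => exact hg
  | comp h s hh ih => exact Word.comp (g ∘ h) s ih

theorem stmt_7 {S X : Type*} [Nonempty S] [Nonempty X]
    (f : S → X → X) (x₀ : X)
    (hmin : ∀ X' : Set X, x₀ ∈ X' → (∀ s x, x ∈ X' → f s x ∈ X') → ∀ x, x ∈ X') :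
    (∃ m : X → X → X,
      (∀ a b c, m (m a b) c = m a (m b c)) ∧
      (∀ x, m x₀ x = x) ∧ (∀ x, m x x₀ = x) ∧
      (∀ s x, f s x = m (f s x₀) x)) ↔
    (∃ f' : S → X → X,
      (∀ s, f' s x₀ = f s x₀) ∧
      (∀ s t, (f' s) ∘ (f t) = (f t) ∘ (f' s))) := by
  constructor
  · rintro ⟨m, hassoc, hl, _hr, hc⟩
    refine ⟨fun s x => m x (f s x₀), fun s => hl _, fun s t => ?_⟩
    funext x
    simp only [Function.comp_apply]
    rw [hc t x, hassoc, ← hc t]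
  · rintro ⟨f', hf0, hcomm⟩
    have wcomm : ∀ g, Word f' g → ∀ t, g ∘ f t = f t ∘ g := by
      intro g hg
      induction hg with
      | id => intro t; rfl
      | comp g s hg ih =>
        intro t
        calc (g ∘ f' s) ∘ f t = g ∘ (f' s ∘ f t) := rfl
        _ = g ∘ (f t ∘ f' s) := by rw [hcomm]
        _ = (g ∘ f t) ∘ f' s := rfl
        _ = f t ∘ (g ∘ f' s) := by rw [ih t]; rfl
    have uniq : ∀ g h, Word f' g → Word f' h → g x₀ = h x₀ → g = h := by
      intro g h hg hh he
      funext x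
      refine hmin {x | g x = h x} he (fun s x hx => ?_) x
      have hg' := congrFun (wcomm g hg s) x
      have hh' := congrFun (wcomm h hh s) x
      simp only [Function.comp_apply] at hg' hh'
      simp only [Set.mem_setOf_eq] at hx ⊢
      rw [hg', hh', hx]
    have surj : ∀ y, ∃ g, Word f' g ∧ g x₀ = y := by
      intro y
      refine hmin {y | ∃ g, Word f' g ∧ g x₀ = y} ⟨_root_.id, Word.id, rfl⟩ ?_ y
      rintro s y ⟨g, hg, rfl⟩
      refine ⟨g ∘ f' s, Word.comp g s hg, ?_⟩
      have := congrFun (wcomm g hg s) x₀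
      simp only [Function.comp_apply] at this ⊢
      rw [hf0, ← this]
    choose gw hgw hgwx using surj
    have gweq : ∀ y g, Word f' g → g x₀ = y → gw y = g := fun y g hg he =>
      uniq _ _ (hgw y) hg (by rw [hgwx y, he])
    refine ⟨fun a b => gw b a, ?_, ?_, ?_, ?_⟩
    · intro a b c
      have hcomp : Word f' (gw c ∘ gw b) := (hgw c).compWord (hgw b)
      have heq : gw (gw c b) = gw c ∘ gw b :=
        gweq _ _ hcomp (by simp only [Function.comp_apply, hgwx b])
      show gw c (gw b a) = gw (gw c b) a
      rw [heq]; rfl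
    · intro x; exact hgwx x
    · intro x
      show gw x₀ x = x
      rw [gweq x₀ _root_.id Word.id rfl]; rfl
    · intro s x
      show f s x = gw x (f s x₀)
      have := congrFun (wcomm (gw x) (hgw x) s) x₀
      simp only [Function.comp_apply] at this
      rw [this, hgwx]
end

section
/- Let Λ = (X, f, x₀) be a minimal commutative L_S-algebra (i.e., f_s ∘ f_t = f_t ∘ f_s for all s, t ∈ S). Then there exists a unique Λ-compatible monoid operation on (X, x₀), and this operation is commutative. -/
theorem stmt_8 {S X : Type*} [Nonempty S] [Nonempty X]
    (f : S → X → X) (x₀ : X)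
    (hmin : ∀ X' : Set X, x₀ ∈ X' → (∀ s x, x ∈ X' → f s x ∈ X') → ∀ x, x ∈ X')
    (hcomm : ∀ s t, (f s) ∘ (f t) = (f t) ∘ (f s)) :
    (∃! m : X → X → X,
      (∀ a b c, m (m a b) c = m a (m b c)) ∧
      (∀ x, m x₀ x = x) ∧ (∀ x, m x x₀ = x) ∧
      (∀ s x, f s x = m (f s x₀) x)) ∧
    (∀ m : X → X → X,
      (∀ a b c, m (m a b) c = m a (m b c)) →
      (∀ x, m x₀ x = x) → (∀ x, m x x₀ = x) →
      (∀ s x, f s x = m (f s x₀) x) →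
      ∀ a b, m a b = m b a) := by
  classical
  -- C g : g commutes with all f s
  set C : (X → X) → Prop := fun g => ∀ s x, g (f s x) = f s (g x) with hC
  have hCf : ∀ s, C (f s) := by
    intro s t x
    exact congrFun (hcomm s t) x
  -- every a is g x₀ for some g with C g
  have hexists : ∀ a : X, ∃ g : X → X, C g ∧ g x₀ = a := by
    intro a
    refine hmin {a | ∃ g : X → X, C g ∧ g x₀ = a} ⟨id, fun s x => rfl, rfl⟩ ?_ a
    rintro s x ⟨g, hg, rfl⟩
    exact ⟨f s ∘ g, fun t y => by
      simp only [Function.comp_apply, hg t y, hCf s t (g y)], rfl⟩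
  -- extensionality
  have hext : ∀ g g' : X → X, C g → C g' → g x₀ = g' x₀ → ∀ b, g b = g' b := by
    intro g g' hg hg' h0
    refine hmin {b | g b = g' b} h0 ?_
    intro s x hx
    show g (f s x) = g' (f s x)
    rw [hg, hg', hx]
  -- the chosen function
    -- define g a and m
  let g : X → X → X := fun a => Classical.choose (hexists a)
  have hCg : ∀ a, C (g a) := fun a => (Classical.choose_spec (hexists a)).1
  have hg0 : ∀ a, g a x₀ = a := fun a => (Classical.choose_spec (hexists a)).2
  let m : X → X → X := fun a b => g a b
  have hchar : ∀ (h : X → X) a, C h → h x₀ = a → ∀ b, m a b = h b := by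
    intro h a hCh h0 b
    exact hext (g a) h (hCg a) hCh (by rw [hg0 a, h0]) b
  have hlu : ∀ x, m x₀ x = x := fun x => hchar id x₀ (fun s x => rfl) rfl x
  have hru : ∀ x, m x x₀ = x := fun x => hg0 x
  have hfm : ∀ s x, f s x = m (f s x₀) x := fun s x =>
    (hchar (f s) (f s x₀) (hCf s) rfl x).symm
  have hassoc : ∀ a b c, m (m a b) c = m a (m b c) := by
    intro a b c
    have h1 : C (g a ∘ g b) := fun s x => by
      simp only [Function.comp_apply, hCg b s x, hCg a s (g b x)]
    have h2 : (g a ∘ g b) x₀ = m a b := by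
      simp only [Function.comp_apply, hg0 b]; rfl
    exact hchar (g a ∘ g b) (m a b) h1 h2 c
  -- commutativity of m
  have hmcomm : ∀ a b, m a b = m b a := by
    intro a b
    refine hmin {a | ∀ y, m a y = m y a} (fun y => by rw [hlu y, hru y]) ?_ a b
    intro s x hx y
    have l1 : m (f s x) y = f s (m x y) := by
      have h1 : C (f s ∘ g x) := fun t z => by
        simp only [Function.comp_apply, hCg x t z, hCf s t (g x z)]
      have h2 : (f s ∘ g x) x₀ = f s x := by simp [hg0 x]
      exact hchar (f s ∘ g x) (f s x) h1 h2 y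
    have l2 : m y (f s x) = f s (m y x) := hCg y s x
    rw [l1, hx y, l2]
  -- uniqueness
  have huniq : ∀ m' : X → X → X,
      (∀ a b c, m' (m' a b) c = m' a (m' b c)) →
      (∀ x, m' x₀ x = x) → (∀ x, m' x x₀ = x) →
      (∀ s x, f s x = m' (f s x₀) x) → m' = m := by
    intro m' ha hl hr hf
    have key : ∀ s x y, m' (f s x) y = f s (m' x y) := by
      intro s x y
      rw [hf s x, ha, ← hf s (m' x y)]
    funext a b
    refine hmin {a | ∀ b, m' a b = m a b} (fun b => by rw [hl, hlu]) ?_ a b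
    intro s x hx b
    rw [key s x b, hx b]
    have l1 : m (f s x) b = f s (m x b) := by
      have h1 : C (f s ∘ g x) := fun t z => by
        simp only [Function.comp_apply, hCg x t z, hCf s t (g x z)]
      have h2 : (f s ∘ g x) x₀ = f s x := by simp [hg0 x]
      exact hchar (f s ∘ g x) (f s x) h1 h2 b
    rw [l1]
  constructor
  · exact ⟨m, ⟨hassoc, hlu, hru, hfm⟩, fun m' ⟨ha, hl, hr, hf⟩ => huniq m' ha hl hr hf⟩
  · intro m' ha hl hr hf a b
    rw [huniq m' ha hl hr hf]
    exact hmcomm a b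
end

section
/- Let Λ = (X, f, x₀) be a minimal L_S-algebra with Λ-compatible monoid operation •. Then the monoid (X, •, x₀) is commutative if and only if f_s ∘ f_t = f_t ∘ f_s for all s, t ∈ S. -/
theorem stmt_9 {S X : Type*} [Nonempty S] [Nonempty X]
    (f : S → X → X) (x₀ : X)
    (hmin : ∀ X' : Set X, x₀ ∈ X' → (∀ s x, x ∈ X' → f s x ∈ X') → ∀ x, x ∈ X')
    (m : X → X → X)
    (hassoc : ∀ a b c, m (m a b) c = m a (m b c))
    (hleft : ∀ x, m x₀ x = x) (hright : ∀ x, m x x₀ = x)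
    (hcompat : ∀ s x, f s x = m (f s x₀) x) :
    (∀ a b, m a b = m b a) ↔ (∀ s t, (f s) ∘ (f t) = (f t) ∘ (f s)) := by
  constructor
  · intro hcomm s t
    funext x
    simp only [Function.comp]
    rw [hcompat s, hcompat t (f s x), hcompat t, hcompat s x,
      ← hassoc, ← hassoc, hcomm (f s x₀) (f t x₀)]
  · intro hcomm
    -- generators commute with each other
    have hgen : ∀ s t, m (f s x₀) (f t x₀) = m (f t x₀) (f s x₀) := by
      intro s t
      have h1 := congrFun (hcomm t s) x₀
      simp only [Function.comp] at h1
      rw [hcompat t (f s x₀), hcompat s (f t x₀)] at h1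
      exact h1.symm
    -- every element commutes with every generator
    have hG : ∀ a, ∀ s, m (f s x₀) a = m a (f s x₀) := by
      intro a
      refine hmin {a | ∀ s, m (f s x₀) a = m a (f s x₀)} (by simp [hleft, hright]) ?_ a
      intro t x hx s
      rw [hcompat t x, ← hassoc, hgen s t, hassoc, hx s, ← hassoc]
    intro a b
    revert b
    refine hmin {a | ∀ b, m a b = m b a} (by simp [hleft, hright]) ?_ a
    intro s x hx b
    rw [hcompat s x, hassoc, hx b, ← hassoc, hG b s, hassoc]
end

section
/- Let Λ = (X, f, x₀) be a minimal L_S-algebra with Λ-compatible monoid operation •. Then the monoid (X, •, x₀) obeys the left cancellation law (x • x₁ = x • x₂ implies x₁ = x₂) if and only if f_s is injective for each s ∈ S. -/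
theorem stmt_10 {S X : Type*} [Nonempty S] [Nonempty X]
    (f : S → X → X) (x₀ : X)
    (hmin : ∀ X' : Set X, x₀ ∈ X' → (∀ s x, x ∈ X' → f s x ∈ X') → ∀ x, x ∈ X')
    (m : X → X → X)
    (hassoc : ∀ a b c, m (m a b) c = m a (m b c))
    (hleft : ∀ x, m x₀ x = x) (hright : ∀ x, m x x₀ = x)
    (hcompat : ∀ s x, f s x = m (f s x₀) x) :
    (∀ x x₁ x₂, m x x₁ = m x x₂ → x₁ = x₂) ↔ (∀ s, Function.Injective (f s)) := by
  constructor
  · intro hc s a b hab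
    rw [hcompat s a, hcompat s b] at hab
    exact hc _ _ _ hab
  · intro hf
    have := hmin {x | ∀ x₁ x₂, m x x₁ = m x x₂ → x₁ = x₂}
      (fun a b h => by rwa [hleft, hleft] at h)
      (fun s x hx a b h => by
        rw [hcompat s x, hassoc, hassoc] at h
        rw [← hcompat, ← hcompat] at h
        exact hx _ _ (hf s h))
    exact this
end

section
/- Let Λ = (X, f, x₀) be a minimal L_S-algebra with Λ-compatible monoid operation •. Then (X, •, x₀) is a group if and only if f_s is surjective for each s ∈ S, which in turn holds if and only if f_s is bijective for each s ∈ S. -/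
theorem stmt_11 {S X : Type*} [Nonempty S] [Nonempty X]
    (f : S → X → X) (x₀ : X)
    (hmin : ∀ X' : Set X, x₀ ∈ X' → (∀ s x, x ∈ X' → f s x ∈ X') → ∀ x, x ∈ X')
    (m : X → X → X)
    (hassoc : ∀ a b c, m (m a b) c = m a (m b c))
    (hleft : ∀ x, m x₀ x = x) (hright : ∀ x, m x x₀ = x)
    (hcompat : ∀ s x, f s x = m (f s x₀) x) :
    ((∀ x, ∃ y, m x y = x₀ ∧ m y x = x₀) ↔ (∀ s, Function.Surjective (f s))) ∧
    ((∀ s, Function.Surjective (f s)) ↔ (∀ s, Function.Bijective (f s))) := by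
  -- surjectivity implies group
  have key : (∀ s, Function.Surjective (f s)) → ∀ x, ∃ y, m x y = x₀ ∧ m y x = x₀ := by
    intro hsurj
    -- every element has a right inverse, by minimality
    have hri : ∀ x, ∃ y, m x y = x₀ := by
      intro x
      refine hmin {x | ∃ y, m x y = x₀} ⟨x₀, hleft x₀⟩ ?_ x
      rintro s x ⟨y, hy⟩
      obtain ⟨z, hz⟩ := hsurj s x₀
      rw [hcompat s z] at hz
      refine ⟨m y z, ?_⟩
      rw [hcompat s x, hassoc, ← hassoc x y z, hy, hleft, hz]
    intro x
    obtain ⟨y, hy⟩ := hri x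
    refine ⟨y, hy, ?_⟩
    obtain ⟨z, hz⟩ := hri y
    calc m y x = m (m y x) (m y z) := by rw [hz, hright]
      _ = x₀ := by rw [hassoc, ← hassoc x y z, hy, hleft, hz]
  constructor
  · constructor
    · intro hgrp s y
      obtain ⟨a, ha1, ha2⟩ := hgrp (f s x₀)
      exact ⟨m a y, by rw [hcompat, ← hassoc, ha1, hleft]⟩
    · exact key
  · constructor
    · intro hsurj s
      refine ⟨?_, hsurj s⟩
      obtain ⟨a, ha1, ha2⟩ := key hsurj (f s x₀)
      intro u v huv
      rw [hcompat s u, hcompat s v] at huv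
      have := congrArg (m a) huv
      rwa [← hassoc, ← hassoc, ha2, hleft, hleft] at this
    · intro h s; exact (h s).2
end

section
/- If •₁ and •₂ are monoid operations on a pointed set (X, x₀) whose sets of left translations coincide (as subsets of the self-maps of X), then •₁ = •₂. -/
theorem stmt_13 {X : Type*} (x₀ : X) (m₁ m₂ : X → X → X)
    (h₁assoc : ∀ a b c, m₁ (m₁ a b) c = m₁ a (m₁ b c))
    (h₁left : ∀ x, m₁ x₀ x = x) (h₁right : ∀ x, m₁ x x₀ = x)
    (h₂assoc : ∀ a b c, m₂ (m₂ a b) c = m₂ a (m₂ b c))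
    (h₂left : ∀ x, m₂ x₀ x = x) (h₂right : ∀ x, m₂ x x₀ = x)
    (hM : {u : X → X | ∀ x, u x = m₁ (u x₀) x} = {u : X → X | ∀ x, u x = m₂ (u x₀) x}) :
    m₁ = m₂ := by
  funext a x
  have hmem : (m₁ a) ∈ {u : X → X | ∀ x, u x = m₁ (u x₀) x} := by
    intro y; simp [h₁right]
  rw [hM] at hmem
  have := hmem x
  simpa [h₁right] using this
end

section
/- If M is an x₀-minimal submonoid of the self-maps of X, then the evaluation map at x₀ restricted to the centraliser Z_M = {u | u ∘ v = v ∘ u for all v ∈ M} is injective. -/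
theorem stmt_15 {X : Type*} (x₀ : X) (M : Set (X → X))
    (hid : id ∈ M) (hcomp : ∀ u ∈ M, ∀ v ∈ M, u ∘ v ∈ M)
    (hmin : ∀ X' : Set X, x₀ ∈ X' → (∀ u ∈ M, ∀ x ∈ X', u x ∈ X') → ∀ x, x ∈ X') :
    ∀ u ∈ {u : X → X | ∀ v ∈ M, u ∘ v = v ∘ u},
    ∀ u' ∈ {u : X → X | ∀ v ∈ M, u ∘ v = v ∘ u},
    u x₀ = u' x₀ → u = u' := by
  intro u hu u' hu' h
  funext x
  refine hmin {x | u x = u' x} h ?_ x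
  intro v hv y hy
  have h1 := congrFun (hu v hv) y
  have h2 := congrFun (hu' v hv) y
  simp only [Function.comp_apply] at h1 h2
  simp only [Set.mem_setOf_eq] at hy ⊢
  rw [h1, h2, hy]
end
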